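/- arXiv:0802.2641 — 2 statements merged into one kernel-verified Lean document; each statement's English description precedes it below -/
import Mathlib

section
/- Assume ν_n(0, λ] ≤ β_n^{λ−1} for λ ≥ κ_n/λ_n*, β_n = exp(τ_n λ_n*), and b > 0, c > 0. Then θ_n(τ_n + c b) ≤ e^{−c b κ_n} (τ_n/(c b) + 1). -/
/-!
By the layer-cake formula, `β ∫ e^{-s l} dν = ∫_0^∞ β ν{l < -log x / s} dx`. The cumulative bound
makes the integrand at most `β ^ (-log x / s) = x ^ (-log β / s)` for `x ≤ e^{-s k}`, and the
support condition `ν (-∞, k) = 0` makes it vanish for larger `x`. As `log β < s`, integrating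
`x ^ (-log β / s)` over `(0, e^{-s k}]` gives `e^{-(s - log β) k} s / (s - log β)`, which for
`s = (τ + c b) λ*`, `log β = τ λ*` and `k = κ / λ*` is the claimed bound.
-/

open MeasureTheory Set Real

lemma setOf_lt_exp_neg_mul {s x : ℝ} (hs : 0 < s) (hx : 0 < x) :
    {l : ℝ | x < exp (-(s * l))} = Iio (-log x / s) := by
  ext l
  rw [mem_ofPred_eq, mem_Iio, ← log_lt_iff_lt_exp hx, lt_div_iff₀ hs]
  constructor <;> intro h <;> linarith

lemma lintegral_Ioc_rpow_neg {a p : ℝ} (ha : 0 ≤ a) (hp : p < 1) :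
    ∫⁻ x in Ioc 0 a, ENNReal.ofReal (x ^ (-p)) = ENNReal.ofReal (a ^ (1 - p) / (1 - p)) := by
  have hint : IntegrableOn (fun x : ℝ => x ^ (-p)) (Ioc 0 a) := by
    rw [← intervalIntegrable_iff_integrableOn_Ioc_of_le ha]
    exact intervalIntegral.intervalIntegrable_rpow' (by linarith)
  rw [← ofReal_integral_eq_lintegral_ofReal hint
    ((ae_restrict_iff' measurableSet_Ioc).2 (.of_forall fun x hx => rpow_nonneg hx.1.le _)),
    ← intervalIntegral.integral_of_le ha, integral_rpow (Or.inl (by linarith)),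
    zero_rpow (by linarith)]
  ring_nf

section

variable {ν : Measure ℝ} {k β : ℝ}

lemma measure_Iio_le_of_cumulative (hk : 0 < k) (hsupp : ν (Iio k) = 0)
    (hcum : ∀ l, k ≤ l → ν (Ioc 0 l) ≤ ENNReal.ofReal (β ^ (l - 1))) {A : ℝ} (hA : k ≤ A) :
    ν (Iio A) ≤ ENNReal.ofReal (β ^ (A - 1)) :=
  calc ν (Iio A) ≤ ν (Iio k ∪ Ioc 0 A) := by
        refine measure_mono fun l hl => ?_
        rcases lt_or_ge l k with hlk | hkl
        · exact Or.inl hlk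
        · exact Or.inr ⟨hk.trans_le hkl, le_of_lt hl⟩
    _ ≤ ν (Ioc 0 A) := by
        grw [measure_union_le, hsupp, zero_add]
    _ ≤ ENNReal.ofReal (β ^ (A - 1)) := hcum A hA

lemma ofReal_mul_measure_lt_exp_neg_mul_le (hk : 0 < k) (hsupp : ν (Iio k) = 0)
    (hcum : ∀ l, k ≤ l → ν (Ioc 0 l) ≤ ENNReal.ofReal (β ^ (l - 1)))
    (hβ : 0 < β) {s : ℝ} (hs : 0 < s) {x : ℝ} (hx : 0 < x) :
    ENNReal.ofReal β * ν {l | x < exp (-(s * l))} ≤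
      (Ioc 0 (exp (-(s * k)))).indicator (fun x => ENNReal.ofReal (x ^ (-(log β / s)))) x := by
  rw [setOf_lt_exp_neg_mul hs hx]
  set A := -log x / s with hA
  by_cases hxa : x ≤ exp (-(s * k))
  · have hkA : k ≤ A := by
      have := (log_le_iff_le_exp hx).2 hxa
      rw [le_div_iff₀ hs]
      linarith
    rw [indicator_of_mem (show x ∈ Ioc 0 _ from ⟨hx, hxa⟩)]
    calc ENNReal.ofReal β * ν (Iio A)
        ≤ ENNReal.ofReal β * ENNReal.ofReal (β ^ (A - 1)) := by
          grw [measure_Iio_le_of_cumulative hk hsupp hcum hkA]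
      _ = ENNReal.ofReal (x ^ (-(log β / s))) := by
          rw [← ENNReal.ofReal_mul hβ.le, mul_comm, ← rpow_add_one hβ.ne', sub_add_cancel,
            rpow_def_of_pos hβ, rpow_def_of_pos hx, hA]
          ring_nf
  · have hAk : A ≤ k := by
      have := (lt_log_iff_exp_lt hx).2 (not_le.1 hxa)
      rw [div_le_iff₀ hs]
      linarith
    rw [measure_mono_null (Iio_subset_Iio hAk) hsupp, mul_zero]
    exact zero_le

theorem mul_integral_exp_neg_mul_le (hk : 0 < k) (hsupp : ν (Iio k) = 0)
    (hcum : ∀ l, k ≤ l → ν (Ioc 0 l) ≤ ENNReal.ofReal (β ^ (l - 1)))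
    (hβ : 0 < β) {s : ℝ} (hs : 0 < s) (hβs : log β < s) :
    β * ∫ l, exp (-(s * l)) ∂ν ≤ exp (-((s - log β) * k)) * (s / (s - log β)) := by
  set p := log β / s with hp_def
  have hp : p < 1 := (div_lt_one hs).2 hβs
  have hnn : 0 ≤ᵐ[ν] fun l => exp (-(s * l)) := .of_forall fun l => (exp_pos _).le
  have hmeas : AEMeasurable (fun l => exp (-(s * l))) ν := by fun_prop
  have hlint : ENNReal.ofReal β * ∫⁻ l, ENNReal.ofReal (exp (-(s * l))) ∂ν ≤
      ENNReal.ofReal (exp (-(s * k)) ^ (1 - p) / (1 - p)) :=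
    calc ENNReal.ofReal β * ∫⁻ l, ENNReal.ofReal (exp (-(s * l))) ∂ν
        = ∫⁻ x in Ioi 0, ENNReal.ofReal β * ν {l | x < exp (-(s * l))} := by
          rw [lintegral_eq_lintegral_meas_lt ν hnn hmeas,
            lintegral_const_mul' _ _ ENNReal.ofReal_ne_top]
      _ ≤ ∫⁻ x in Ioi 0,
            (Ioc 0 (exp (-(s * k)))).indicator (fun x => ENNReal.ofReal (x ^ (-p))) x :=
          setLIntegral_mono ((by fun_prop : Measurable _).indicator measurableSet_Ioc) fun x hx =>
            ofReal_mul_measure_lt_exp_neg_mul_le hk hsupp hcum hβ hs hx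
      _ = ∫⁻ x in Ioc 0 (exp (-(s * k))), ENNReal.ofReal (x ^ (-p)) := by
          rw [lintegral_indicator measurableSet_Ioc, Measure.restrict_restrict measurableSet_Ioc,
            inter_eq_left.2 Ioc_subset_Ioi_self]
      _ = ENNReal.ofReal (exp (-(s * k)) ^ (1 - p) / (1 - p)) :=
          lintegral_Ioc_rpow_neg (exp_pos _).le hp
  have hval :
      exp (-(s * k)) ^ (1 - p) / (1 - p) = exp (-((s - log β) * k)) * (s / (s - log β)) := by
    have hexp : -(s * k) * (1 - p) = -((s - log β) * k) := by
      rw [hp_def]; field_simp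
    have hdenom : 1 - p = (s - log β) / s := by
      rw [hp_def]; field_simp
    rw [← exp_mul, hexp, hdenom, div_div_eq_mul_div, mul_div_assoc]
  rw [integral_eq_lintegral_of_nonneg_ae hnn hmeas.aestronglyMeasurable, ← hval,
    ← ENNReal.toReal_ofReal hβ.le, ← ENNReal.toReal_mul]
  exact ENNReal.toReal_le_of_le_ofReal (by positivity) hlint

end

/-- Upper bound θ_n(τ_n + cb) ≤ e^{−cbκ_n}(τ_n/(cb) + 1). -/
theorem stmt11 (ν : Measure ℝ) [IsFiniteMeasure ν] (κ lamstar τ β : ℝ)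
    (hκ : 1 < κ) (hls : 1 < lamstar) (hβ : 1 < β)
    (hβdef : β = Real.exp (τ * lamstar))
    (hsupp : ν (Set.Iio (κ / lamstar)) = 0)
    (hcum : ∀ l, κ / lamstar ≤ l → (ν (Set.Ioc 0 l)).toReal ≤ β ^ (l - 1))
    (b c : ℝ) (hb : 0 < b) (hc : 0 < c) :
    β * ∫ l, Real.exp (-(τ + c * b) * lamstar * l) ∂ν
      ≤ Real.exp (-(c * b * κ)) * (τ / (c * b) + 1) := by
  have hls0 : 0 < lamstar := by linarith
  have hcb : 0 < c * b := mul_pos hc hb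
  have hlogβ : log β = τ * lamstar := by rw [hβdef, log_exp]
  have hτ : 0 < τ := pos_of_mul_pos_left (hlogβ ▸ log_pos hβ) hls0.le
  have hcum' : ∀ l, κ / lamstar ≤ l → ν (Ioc 0 l) ≤ ENNReal.ofReal (β ^ (l - 1)) := fun l hl =>
    (ENNReal.le_ofReal_iff_toReal_le (measure_ne_top ν _) (by positivity)).2 (hcum l hl)
  have hbound := mul_integral_exp_neg_mul_le (s := (τ + c * b) * lamstar)
    (div_pos (by linarith) hls0) hsupp hcum' (by linarith) (by positivity)
    (by rw [hlogβ]; nlinarith)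
  convert hbound using 3
  · ring_nf
  · rw [hlogβ]; field_simp; ring
  · rw [hlogβ]; field_simp; ring
end

section
/- Let coordinates of a random walk on ℤ₂ⁿ have rates ρ_n^i which are i.i.d. over a finite set {p_1, ..., p_m} with probabilities {q_1, ..., q_m}, and let p* = min_k p_k with q* = P(ρ = p*). Then for fixed c ∈ ℝ, the (deterministic given the rates, then averaged) separation at time (log n + c)/(2p*) satisfies 1 − (1 − ∑_k q_k (e^{−c}/n)^{p_k/p*})^n → 1 − exp(−q* e^{−c}) as n → ∞. -/
/-!
With `x = e^{-c}` and `r_k = p_k / p* ≥ 1`, the terms with `r_k > 1` satisfy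
`n (x/n)^{r_k} = x (x/n)^{r_k - 1} → 0`, so `n ∑_k q_k (x/n)^{r_k} → q* x`.
The limit then follows from `(1 + g_n)^n → e^t` whenever `n g_n → t`.
-/

open Filter Topology

theorem tendsto_natCast_mul_div_rpow {x r : ℝ} (hx : 0 ≤ x) (hr : 1 ≤ r) :
    Tendsto (fun n : ℕ => (n : ℝ) * (x / n) ^ r) atTop (𝓝 (if r = 1 then x else 0)) := by
  split_ifs with hr1
  · subst hr1
    refine tendsto_const_nhds.congr' ?_
    filter_upwards [eventually_ne_atTop 0] with n hn
    rw [Real.rpow_one]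
    field_simp
  · have hdiv : Tendsto (fun n : ℕ => x / n) atTop (𝓝 0) :=
      tendsto_const_div_atTop_nhds_zero_nat x
    have hpow : Tendsto (fun n : ℕ => (x / n) ^ (r - 1)) atTop (𝓝 0) := by
      simpa [Real.zero_rpow (sub_ne_zero.2 hr1)] using
        hdiv.rpow_const (Or.inr (sub_nonneg.2 hr))
    have hlim : Tendsto (fun n : ℕ => x * (x / n) ^ (r - 1)) atTop (𝓝 0) := by
      simpa using hpow.const_mul x
    refine hlim.congr' ?_
    filter_upwards [eventually_ne_atTop 0] with n hn
    have hsplit : (x / n) ^ r = (x / n) * (x / n) ^ (r - 1) := by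
      rw [← Real.rpow_one_add' (by positivity) (by
        rw [add_sub_cancel]; exact (zero_lt_one.trans_le hr).ne'),
        add_sub_cancel]
    rw [hsplit]
    field_simp

theorem tendsto_natCast_mul_sum_div_rpow {ι : Type*} [Fintype ι] (q r : ι → ℝ) {x : ℝ}
    (hx : 0 ≤ x) (hr : ∀ k, 1 ≤ r k) :
    Tendsto (fun n : ℕ => (n : ℝ) * ∑ k, q k * (x / n) ^ r k) atTop
      (𝓝 ((∑ k ∈ Finset.univ.filter (fun k => r k = 1), q k) * x)) := by
  have hterms := tendsto_finsetSum Finset.univ fun k _ =>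
    (tendsto_natCast_mul_div_rpow hx (hr k)).const_mul (q k)
  simp only [mul_ite, mul_zero, ← Finset.sum_filter] at hterms
  rw [Finset.sum_mul]
  refine hterms.congr fun n => ?_
  rw [Finset.mul_sum]
  exact Finset.sum_congr rfl fun k _ => by ring

theorem stmt19_general (m : ℕ) (p q : Fin m → ℝ)
    (hp : ∀ k, 0 < p k)
    (pstar qstar : ℝ) (hmin : ∀ k, pstar ≤ p k) (hattain : ∃ k, p k = pstar)
    (hqstar : qstar = ∑ k ∈ Finset.univ.filter (fun k => p k = pstar), q k)
    (c : ℝ) :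
    Tendsto (fun n : ℕ =>
        1 - (1 - ∑ k, q k * (Real.exp (-c) / n) ^ (p k / pstar)) ^ n)
      atTop (nhds (1 - Real.exp (-(qstar * Real.exp (-c))))) := by
  obtain ⟨k₀, hk₀⟩ := hattain
  have hpstar : 0 < pstar := hk₀ ▸ hp k₀
  have hratio_eq_one : ∀ k, p k / pstar = 1 ↔ p k = pstar := fun k =>
    div_eq_one_iff_eq hpstar.ne'
  have hsum := tendsto_natCast_mul_sum_div_rpow q (fun k => p k / pstar) (Real.exp_pos (-c)).le
    fun k => (one_le_div hpstar).2 (hmin k)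
  simp only [hratio_eq_one, ← hqstar] at hsum
  have hpow := Real.tendsto_one_add_pow_exp_of_tendsto (t := -(qstar * Real.exp (-c)))
    (g := fun n => -∑ k, q k * (Real.exp (-c) / n) ^ (p k / pstar)) (by simpa using hsum.neg)
  simpa [← sub_eq_add_neg] using tendsto_const_nhds.sub hpow

/-- Gumbel-type limit for the walk on ℤ₂ⁿ with i.i.d. random rates from a finite set. -/
theorem stmt19 (m : ℕ) (hm : 0 < m) (p q : Fin m → ℝ)
    (hp : ∀ k, 0 < p k) (hq : ∀ k, 0 < q k) (hq1 : ∑ k, q k = 1)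
    (pstar qstar : ℝ) (hmin : ∀ k, pstar ≤ p k) (hattain : ∃ k, p k = pstar)
    (hqstar : qstar = ∑ k ∈ Finset.univ.filter (fun k => p k = pstar), q k)
    (c : ℝ) :
    Tendsto (fun n : ℕ =>
        1 - (1 - ∑ k, q k * (Real.exp (-c) / n) ^ (p k / pstar)) ^ n)
      atTop (nhds (1 - Real.exp (-(qstar * Real.exp (-c))))) :=
  stmt19_general m p q hp pstar qstar hmin hattain hqstar c
end
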